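/- If φ : ℝ → ℝ is a smooth function that is positive outside a compact set, then the Ilmanen space (ℝ³, e^{φ(x₃)}⟨·,·⟩) is a complete Riemannian manifold. -/

import Mathlib

noncomputable section

open Real MeasureTheory Filter

abbrev E3 := EuclideanSpace ℝ (Fin 3)

/-- Length of a path in the Ilmanen space `(ℝ³, e^{φ(x₃)}⟨·,·⟩)`:
the conformal factor of lengths is `e^{φ/2}`. -/
def confLength (φ : ℝ → ℝ) (γ : ℝ → E3) : ℝ :=
  ∫ t in (0:ℝ)..1, Real.exp (φ (γ t 2) / 2) * ‖deriv γ t‖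

/-- The Riemannian distance of the Ilmanen space: infimum of conformal lengths of
`C¹` paths joining two points. -/
def confDist (φ : ℝ → ℝ) (x y : E3) : ℝ :=
  sInf {l | ∃ γ : ℝ → E3, ContDiff ℝ 1 γ ∧ γ 0 = x ∧ γ 1 = y ∧ l = confLength φ γ}

lemma coord_abs_le_norm (v : E3) (i : Fin 3) : |v i| ≤ ‖v‖ := by
  rw [EuclideanSpace.norm_eq]
  have h1 : |v i| = Real.sqrt (‖v i‖ ^ 2) := by
    rw [Real.sqrt_sq_eq_abs]; simp [Real.norm_eq_abs, abs_abs]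
  rw [h1]
  exact Real.sqrt_le_sqrt (Finset.single_le_sum
    (f := fun j => ‖v j‖ ^ 2) (fun j _ => sq_nonneg _) (Finset.mem_univ i))

/-- The straight line path. -/
def line (x y : E3) : ℝ → E3 := fun t => x + t • (y - x)

lemma line_contDiff (x y : E3) : ContDiff ℝ 1 (line x y) :=
  contDiff_const.add (contDiff_id.smul contDiff_const)

lemma line_deriv (x y : E3) (t : ℝ) : deriv (line x y) t = y - x := by
  have : HasDerivAt (line x y) (y - x) t := by
    have h := ((hasDerivAt_id t).smul_const (y - x)).const_add x
    rw [one_smul] at h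
    exact h
  exact this.deriv

lemma line_zero (x y : E3) : line x y 0 = x := by simp [line]
lemma line_one (x y : E3) : line x y 1 = y := by simp [line]

section Main

variable (φ : ℝ → ℝ)

lemma confLength_line (hφ : Continuous φ) (x y : E3) (C : ℝ)
    (hC : ∀ t ∈ Set.Icc (0:ℝ) 1, Real.exp (φ (line x y t 2) / 2) ≤ C) :
    confLength φ (line x y) ≤ C * ‖y - x‖ := by
  have hcont : Continuous fun t => Real.exp (φ (line x y t 2) / 2) * ‖deriv (line x y) t‖ := by
    simp only [line_deriv]
    exact ((Real.continuous_exp.comp ((hφ.comp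
      ((continuous_apply (2 : Fin 3)).comp ((PiLp.continuous_ofLp 2 _).comp (line_contDiff x y).continuous))).div_const 2))).mul
      continuous_const
  have h1 : confLength φ (line x y) ≤ ∫ _ in (0:ℝ)..1, C * ‖y - x‖ := by
    refine intervalIntegral.integral_mono_on zero_le_one
      (hcont.intervalIntegrable 0 1) (intervalIntegrable_const) ?_
    intro t ht
    rw [line_deriv]
    exact mul_le_mul_of_nonneg_right (hC t ht) (norm_nonneg _)
  simpa using h1

lemma norm_le_length (hφ : Continuous φ) (c : ℝ) (hc : 0 < c) (hφc : ∀ z, c ≤ Real.exp (φ z / 2))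
    (γ : ℝ → E3) (hγ : ContDiff ℝ 1 γ) :
    c * ‖γ 1 - γ 0‖ ≤ confLength φ γ := by
  have hd : Differentiable ℝ γ := hγ.differentiable one_ne_zero
  have hderiv_cont : Continuous (deriv γ) := hγ.continuous_deriv le_rfl
  have hnorm_int : IntervalIntegrable (fun t => ‖deriv γ t‖) volume 0 1 :=
    (hderiv_cont.norm).intervalIntegrable 0 1
  have hftc : ∫ t in (0:ℝ)..1, deriv γ t = γ 1 - γ 0 :=
    intervalIntegral.integral_deriv_eq_sub (fun t _ => hd t)
      (hderiv_cont.intervalIntegrable 0 1)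
  have h2 : ‖γ 1 - γ 0‖ ≤ ∫ t in (0:ℝ)..1, ‖deriv γ t‖ := by
    rw [← hftc]
    exact intervalIntegral.norm_integral_le_integral_norm zero_le_one
  have h3 : c * ‖γ 1 - γ 0‖ ≤ c * ∫ t in (0:ℝ)..1, ‖deriv γ t‖ :=
    mul_le_mul_of_nonneg_left h2 hc.le
  have h4 : c * ∫ t in (0:ℝ)..1, ‖deriv γ t‖ ≤ confLength φ γ := by
    rw [← intervalIntegral.integral_const_mul]
    refine intervalIntegral.integral_mono_on zero_le_one
      (hnorm_int.const_mul c) ?_ ?_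
    · exact ((Real.continuous_exp.comp ((hφ.comp
        ((continuous_apply (2 : Fin 3)).comp ((PiLp.continuous_ofLp 2 _).comp hγ.continuous))).div_const 2)).mul
        hderiv_cont.norm).intervalIntegrable 0 1
    · intro t _
      exact mul_le_mul_of_nonneg_right (hφc _) (norm_nonneg _)
  linarith

end Main

/-- If `φ : ℝ → ℝ` is smooth and positive outside a compact set, then the
Ilmanen space `(ℝ³, e^{φ(x₃)}⟨·,·⟩)` is complete: every sequence that is Cauchy for the
conformal Riemannian distance converges to a point of `ℝ³` in this distance. -/
theorem ilmanen_space_complete (φ : ℝ → ℝ) (hφ : ContDiff ℝ (⊤ : ℕ∞) φ)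
    (hpos : ∃ K : Set ℝ, IsCompact K ∧ ∀ z ∉ K, 0 < φ z) :
    ∀ u : ℕ → E3,
      (∀ ε > 0, ∃ Nn : ℕ, ∀ m ≥ Nn, ∀ n ≥ Nn, confDist φ (u m) (u n) < ε) →
      ∃ x : E3, Tendsto (fun n => confDist φ (u n) x) atTop (nhds 0) := by
  intro u hu
  have hφcont : Continuous φ := hφ.continuous
  -- uniform lower bound on the conformal factor
  obtain ⟨K, hK, hKpos⟩ := hpos
  obtain ⟨m₀, hm₀⟩ : ∃ m₀ : ℝ, ∀ z, m₀ ≤ φ z := by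
    rcases K.eq_empty_or_nonempty with hKe | hKne
    · exact ⟨0, fun z => (hKpos z (by simp [hKe])).le⟩
    · obtain ⟨z₀, hz₀K, hz₀min⟩ := hK.exists_isMinOn hKne (hφcont.continuousOn)
      refine ⟨min (φ z₀) 0, fun z => ?_⟩
      by_cases hz : z ∈ K
      · exact le_trans (min_le_left _ _) (hz₀min hz)
      · exact le_trans (min_le_right _ _) (hKpos z hz).le
  set c : ℝ := Real.exp (m₀ / 2) with hc_def
  have hc : 0 < c := Real.exp_pos _
  have hφc : ∀ z, c ≤ Real.exp (φ z / 2) := fun z =>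
    Real.exp_le_exp.mpr (by linarith [hm₀ z])
  -- lower bound on confDist, and bddBelow of the defining set
  have hbdd : ∀ x y : E3, BddBelow
      {l | ∃ γ : ℝ → E3, ContDiff ℝ 1 γ ∧ γ 0 = x ∧ γ 1 = y ∧ l = confLength φ γ} := by
    intro x y
    refine ⟨0, ?_⟩
    rintro l ⟨γ, hγ, h0, h1, rfl⟩
    have := norm_le_length φ hφcont c hc hφc γ hγ
    nlinarith [norm_nonneg (γ 1 - γ 0)]
  have hmem : ∀ x y : E3, confLength φ (line x y) ∈
      {l | ∃ γ : ℝ → E3, ContDiff ℝ 1 γ ∧ γ 0 = x ∧ γ 1 = y ∧ l = confLength φ γ} :=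
    fun x y => ⟨line x y, line_contDiff x y, line_zero x y, line_one x y, rfl⟩
  have hlow : ∀ x y : E3, c * ‖y - x‖ ≤ confDist φ x y := by
    intro x y
    refine le_csInf ⟨_, hmem x y⟩ ?_
    rintro l ⟨γ, hγ, h0, h1, rfl⟩
    have := norm_le_length φ hφcont c hc hφc γ hγ
    rwa [h0, h1] at this
  -- the sequence is Cauchy in the Euclidean metric
  have hcauchy : CauchySeq u := by
    rw [Metric.cauchySeq_iff]
    intro ε hε
    obtain ⟨N, hN⟩ := hu (c * ε) (by positivity)
    refine ⟨N, fun m hm n hn => ?_⟩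
    have h1 := hlow (u m) (u n)
    have h2 := hN m hm n hn
    have : c * ‖u n - u m‖ < c * ε := lt_of_le_of_lt h1 h2
    have h3 : ‖u n - u m‖ < ε := by
      exact lt_of_mul_lt_mul_left this hc.le
    rw [dist_eq_norm]
    rwa [norm_sub_rev]
  obtain ⟨x, hx⟩ := cauchySeq_tendsto_of_complete hcauchy
  refine ⟨x, ?_⟩
  -- upper bound near x
  obtain ⟨z₁, hz₁I, hz₁max⟩ := (isCompact_Icc (a := x 2 - 1) (b := x 2 + 1)).exists_isMaxOn
    ⟨x 2, by constructor <;> linarith⟩ hφcont.continuousOn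
  set M := φ z₁ with hM_def
  set C : ℝ := Real.exp (M / 2) with hC_def
  have hupper : ∀ y : E3, ‖x - y‖ ≤ 1 → confDist φ y x ≤ C * ‖x - y‖ := by
    intro y hy
    refine le_trans (csInf_le (hbdd y x) (hmem y x)) ?_
    refine confLength_line φ hφcont y x C ?_
    intro t ht
    have hline : line y x t 2 = y 2 + t * (x 2 - y 2) := by
      simp [line, smul_eq_mul]
    have hcoord : |y 2 - x 2| ≤ ‖x - y‖ := by
      have := coord_abs_le_norm (x - y) 2
      simp only [PiLp.sub_apply] at this
      rwa [abs_sub_comm]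
    have hmemI : line y x t 2 ∈ Set.Icc (x 2 - 1) (x 2 + 1) := by
      rw [hline]
      have habs : |y 2 + t * (x 2 - y 2) - x 2| ≤ 1 := by
        have : y 2 + t * (x 2 - y 2) - x 2 = (1 - t) * (y 2 - x 2) := by ring
        rw [this, abs_mul]
        have h1t : |1 - t| ≤ 1 := by
          rw [abs_le]; constructor <;> [linarith [ht.2]; linarith [ht.1]]
        calc |1 - t| * |y 2 - x 2| ≤ 1 * |y 2 - x 2| :=
              mul_le_mul_of_nonneg_right h1t (abs_nonneg _)
          _ ≤ 1 := by rw [one_mul]; exact le_trans hcoord hy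
      rw [abs_le] at habs
      exact ⟨by linarith [habs.1], by linarith [habs.2]⟩
    have hb : φ (line y x t 2) ≤ M := hz₁max hmemI
    exact Real.exp_le_exp.mpr (by linarith)
  -- squeeze
  have hdist : Tendsto (fun n => ‖x - u n‖) atTop (nhds 0) := by
    have h := Filter.Tendsto.dist (tendsto_const_nhds (x := x) (f := atTop)) hx
    simpa [dist_eq_norm] using h
  have hCd : Tendsto (fun n => C * ‖x - u n‖) atTop (nhds 0) := by
    simpa using hdist.const_mul C
  refine squeeze_zero' ?_ ?_ hCd
  · filter_upwards with n
    have := hlow (u n) x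
    nlinarith [norm_nonneg (x - u n)]
  · have h1 : ∀ᶠ n in atTop, ‖x - u n‖ ≤ 1 := by
      have := hdist.eventually (eventually_le_nhds (by norm_num : (0:ℝ) < 1))
      filter_upwards [this] with n hn using hn
    filter_upwards [h1] with n hn using hupper (u n) hn
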